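/- arXiv:2208.00930 — 2 statements merged into one kernel-verified Lean document; each statement's English description precedes it below -/
import Mathlib

section
/- Let c be a nonzero real number and let P be a square complex matrix satisfying P^2 = I. Set p = cosh(c) / exp(|c|). Then p ∈ [1/2, 1] and exp(c • P) = exp(|c|) • ( p • I + (1 − p) • (sign(c) • P) ); that is, exp(c • P) is, up to the scalar factor exp(|c|), a convex combination of the identity matrix and the matrix sign(c) • P. -/
/-!
Since `P ^ 2 = 1`, the even terms of the exponential series of `t • P` are multiples of `1` and the
odd ones multiples of `P`, so they sum to `cosh t • 1 + sinh t • P`. For real `c` the weights are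
`cosh c = exp |c| * p` and `sinh c = exp |c| * (1 - p) * sign c`, and `p ∈ [1/2, 1]` because
`exp |c| / 2 ≤ cosh c ≤ exp |c|`.
-/

open scoped Nat

open NormedSpace in
theorem exp_smul_of_sq_eq_one {𝔸 : Type*} [Ring 𝔸] [Algebra ℂ 𝔸] [TopologicalSpace 𝔸]
    [IsTopologicalRing 𝔸] [ContinuousSMul ℂ 𝔸] [T2Space 𝔸] {P : 𝔸} (hP : P ^ 2 = 1) (t : ℂ) :
    exp (t • P) = Complex.cosh t • (1 : 𝔸) + Complex.sinh t • P := by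
  have hterm : ∀ k : ℕ, (k ! : ℂ)⁻¹ • (t • P) ^ k = (t ^ k / k !) • P ^ k := fun k => by
    rw [smul_pow, smul_smul, div_eq_inv_mul]
  have hPeven : ∀ n, P ^ (2 * n) = 1 := fun n => by rw [pow_mul, hP, one_pow]
  have hPodd : ∀ n, P ^ (2 * n + 1) = P := fun n => by rw [pow_succ, hPeven, one_mul]
  rw [exp_eq_tsum ℂ]
  refine HasSum.tsum_eq (HasSum.even_add_odd ?_ ?_)
  · simpa only [hterm, hPeven] using (Complex.hasSum_cosh t).smul_const (1 : 𝔸)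
  · simpa only [hterm, hPodd] using (Complex.hasSum_sinh t).smul_const P

theorem Real.cosh_le_exp_abs (x : ℝ) : Real.cosh x ≤ Real.exp |x| := by
  rw [← Real.cosh_abs, ← Real.cosh_add_sinh]
  exact le_add_of_nonneg_right (Real.sinh_nonneg_iff.mpr (abs_nonneg x))

theorem Real.exp_abs_le_two_mul_cosh (x : ℝ) : Real.exp |x| ≤ 2 * Real.cosh x := by
  rw [← Real.cosh_abs, Real.cosh_eq]
  linarith [Real.exp_pos (-|x|)]

theorem Real.sign_mul_exp_abs_sub_cosh (x : ℝ) :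
    Real.sign x * (Real.exp |x| - Real.cosh x) = Real.sinh x := by
  rcases lt_trichotomy x 0 with hx | rfl | hx
  · rw [Real.sign_of_neg hx, abs_of_neg hx, ← Real.cosh_neg, ← Real.cosh_add_sinh, Real.sinh_neg]
    ring
  · simp
  · rw [Real.sign_of_pos hx, abs_of_pos hx, ← Real.cosh_add_sinh]
    ring

theorem matrix_exp_of_involution_convex_combination_general (m : ℕ) (c : ℝ)
    (P : Matrix (Fin m) (Fin m) ℂ) (hP : P ^ 2 = 1)
    (p : ℝ) (hp : p = Real.cosh c / Real.exp |c|) :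
    p ∈ Set.Icc (1 / 2 : ℝ) 1 ∧
    NormedSpace.exp ((c : ℂ) • P)
        = Real.exp |c| •
            (p • (1 : Matrix (Fin m) (Fin m) ℂ) + (1 - p) • (Real.sign c • P)) := by
  have hexp : 0 < Real.exp |c| := Real.exp_pos _
  subst hp
  refine ⟨⟨?_, ?_⟩, ?_⟩
  · rw [le_div_iff₀ hexp]
    linarith [Real.exp_abs_le_two_mul_cosh c]
  · exact (div_le_one hexp).mpr (Real.cosh_le_exp_abs c)
  have hcosh : Real.exp |c| * (Real.cosh c / Real.exp |c|) = Real.cosh c := by field_simp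
  have hsinh : Real.exp |c| * (1 - Real.cosh c / Real.exp |c|) * Real.sign c = Real.sinh c := by
    rw [← Real.sign_mul_exp_abs_sub_cosh]
    field_simp
  rw [exp_smul_of_sq_eq_one hP, ← Complex.ofReal_cosh, ← Complex.ofReal_sinh, Complex.coe_smul,
    Complex.coe_smul, smul_add, smul_smul, smul_smul, smul_smul, hcosh, hsinh]

theorem matrix_exp_of_involution_convex_combination (m : ℕ) (c : ℝ) (hc : c ≠ 0)
    (P : Matrix (Fin m) (Fin m) ℂ) (hP : P ^ 2 = 1)
    (p : ℝ) (hp : p = Real.cosh c / Real.exp |c|) :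
    p ∈ Set.Icc (1 / 2 : ℝ) 1 ∧
    NormedSpace.exp ((c : ℂ) • P)
        = Real.exp |c| •
            (p • (1 : Matrix (Fin m) (Fin m) ℂ) + (1 - p) • (Real.sign c • P)) :=
  matrix_exp_of_involution_convex_combination_general m c P hP p hp
end

section
/- Let U be a 2^N × 2^N unitary matrix, let |0⟩⟨0| be the projector onto the first computational basis state of one qubit, let ρ = |0⟩⟨0| ⊗ (2^{−N} • I_{2^N}) be the one-clean-qubit input state, let H₁ be the 2×2 Hadamard matrix, and let CU = |0⟩⟨0| ⊗ I_{2^N} + |1⟩⟨1| ⊗ U be the controlled-U operation. Let σ = CU · (H₁ ⊗ I_{2^N}) · ρ · (H₁ ⊗ I_{2^N})† · CU† be the state after applying the Hadamard on the clean qubit followed by the controlled-U. Then tr( (X ⊗ I_{2^N}) · σ ) = Re(tr U) / 2^N, where X is the single-qubit Pauli X matrix. -/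
/-!
STATEMENT 6: In the DQC1 trace-estimation circuit (one clean qubit in `|0⟩`, `N`
maximally mixed qubits, a Hadamard on the clean qubit followed by controlled-`U`),
the expectation of Pauli `X` on the clean qubit equals `Re (tr U) / 2^N`.
-/

noncomputable section

open Matrix
open scoped Kronecker

/-- The single-qubit Pauli X matrix. -/
def PauliX : Matrix (Fin 2) (Fin 2) ℂ := !![0, 1; 1, 0]

/-- The projector `|0⟩⟨0|` on one qubit. -/
def proj0 : Matrix (Fin 2) (Fin 2) ℂ := !![1, 0; 0, 0]

/-- The projector `|1⟩⟨1|` on one qubit. -/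
def proj1 : Matrix (Fin 2) (Fin 2) ℂ := !![0, 0; 0, 1]

/-- The single-qubit Hadamard matrix. -/
def Hadamard : Matrix (Fin 2) (Fin 2) ℂ :=
  (((Real.sqrt 2)⁻¹ : ℝ) : ℂ) • !![1, 1; 1, -1]

/-!
By cyclicity of the trace, `tr ((X ⊗ 1) σ) = tr (CUᴴ (X ⊗ 1) CU · (H |0⟩⟨0| H ⊗ 2⁻ᴺ 1))`.
Conjugating `X ⊗ 1` by the controlled gate gives `|0⟩⟨1| ⊗ U + |1⟩⟨0| ⊗ Uᴴ`, while
`H |0⟩⟨0| H` is half the all-ones matrix, so the trace is `2⁻ᴺ⁻¹ (tr U + conj (tr U))`.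
-/

variable {n : Type*} [DecidableEq n]

def controlled (U : Matrix n n ℂ) : Matrix (Fin 2 × n) (Fin 2 × n) ℂ :=
  proj0 ⊗ₖ 1 + proj1 ⊗ₖ U

lemma conjTranspose_proj0 : proj0ᴴ = proj0 := by
  ext i j; fin_cases i <;> fin_cases j <;> simp [proj0]

lemma conjTranspose_proj1 : proj1ᴴ = proj1 := by
  ext i j; fin_cases i <;> fin_cases j <;> simp [proj1]

lemma conjTranspose_hadamard : Hadamardᴴ = Hadamard := by
  ext i j; fin_cases i <;> fin_cases j <;> simp [Hadamard]

lemma hadamard_mul_proj0_mul_hadamard :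
    Hadamard * proj0 * Hadamard = (2 : ℂ)⁻¹ • !![1, 1; 1, 1] := by
  have hsqrt : ((Real.sqrt 2 : ℂ))⁻¹ * (Real.sqrt 2 : ℂ)⁻¹ = 2⁻¹ := by
    rw [← mul_inv, ← Complex.ofReal_mul, Real.mul_self_sqrt zero_le_two]
    norm_num
  simp [Hadamard, proj0, hsqrt]

lemma conjTranspose_controlled (U : Matrix n n ℂ) : (controlled U)ᴴ = controlled Uᴴ := by
  simp [controlled, conjTranspose_kronecker, conjTranspose_proj0, conjTranspose_proj1]

lemma conjTranspose_controlled_mul_pauliX_kronecker_one_mul_controlled [Fintype n]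
    (U : Matrix n n ℂ) :
    (controlled U)ᴴ * (PauliX ⊗ₖ 1) * controlled U =
      !![0, 1; 0, 0] ⊗ₖ U + !![0, 0; 1, 0] ⊗ₖ Uᴴ := by
  have h00 : proj0 * PauliX * proj0 = 0 := by
    ext i j; fin_cases i <;> fin_cases j <;> simp [proj0, PauliX]
  have h01 : proj0 * PauliX * proj1 = !![0, 1; 0, 0] := by
    ext i j; fin_cases i <;> fin_cases j <;> simp [proj0, proj1, PauliX]
  have h10 : proj1 * PauliX * proj0 = !![0, 0; 1, 0] := by
    ext i j; fin_cases i <;> fin_cases j <;> simp [proj0, proj1, PauliX]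
  have h11 : proj1 * PauliX * proj1 = 0 := by
    ext i j; fin_cases i <;> fin_cases j <;> simp [proj1, PauliX]
  rw [conjTranspose_controlled]
  simp only [controlled, add_mul, mul_add, ← mul_kronecker_mul, one_mul, mul_one, h00, h01, h10,
    h11, zero_kronecker, zero_add, add_zero]
  exact add_comm _ _

theorem dqc1_trace_estimation_real_part_general (N : ℕ)
    (U : Matrix (Fin N → Fin 2) (Fin N → Fin 2) ℂ) :
    let I2N : Matrix (Fin N → Fin 2) (Fin N → Fin 2) ℂ := 1
    let ρ := proj0 ⊗ₖ (((2 : ℂ) ^ N)⁻¹ • I2N)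
    let CU := proj0 ⊗ₖ I2N + proj1 ⊗ₖ U
    let σ := CU * (Hadamard ⊗ₖ I2N) * ρ * (Hadamard ⊗ₖ I2N)ᴴ * CUᴴ
    Matrix.trace ((PauliX ⊗ₖ I2N) * σ) = (((Matrix.trace U).re / 2 ^ N : ℝ) : ℂ) := by
  intro I2N ρ CU σ
  have hρ : (Hadamard ⊗ₖ I2N) * ρ * (Hadamard ⊗ₖ I2N)ᴴ =
      (Hadamard * proj0 * Hadamard) ⊗ₖ (((2 : ℂ) ^ N)⁻¹ • 1) := by
    rw [conjTranspose_kronecker, conjTranspose_hadamard, conjTranspose_one, ← mul_kronecker_mul,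
      ← mul_kronecker_mul, mul_one, one_mul]
  have hσ : σ = CU * ((Hadamard * proj0 * Hadamard) ⊗ₖ (((2 : ℂ) ^ N)⁻¹ • 1)) * CUᴴ := by
    rw [← hρ]
    simp only [σ, Matrix.mul_assoc]
  calc trace ((PauliX ⊗ₖ I2N) * σ)
      = trace ((controlled U)ᴴ * (PauliX ⊗ₖ 1) * controlled U *
          ((Hadamard * proj0 * Hadamard) ⊗ₖ (((2 : ℂ) ^ N)⁻¹ • 1))) := by
        rw [hσ, ← Matrix.mul_assoc, trace_mul_cycle]
        simp only [Matrix.mul_assoc]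
        rfl
    _ = (2⁻¹ * ((2 : ℂ) ^ N)⁻¹) *
          trace ((!![0, 1; 0, 0] ⊗ₖ U + !![0, 0; 1, 0] ⊗ₖ Uᴴ) * (!![1, 1; 1, 1] ⊗ₖ 1)) := by
        rw [conjTranspose_controlled_mul_pauliX_kronecker_one_mul_controlled,
          hadamard_mul_proj0_mul_hadamard, smul_kronecker, kronecker_smul, smul_smul,
          Matrix.mul_smul, trace_smul, smul_eq_mul]
    _ = (2⁻¹ * ((2 : ℂ) ^ N)⁻¹) * (trace U + star (trace U)) := by
        simp [add_mul, ← mul_kronecker_mul, trace_kronecker, trace_fin_two]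
    _ = (((Matrix.trace U).re / 2 ^ N : ℝ) : ℂ) := by
        rw [Complex.star_def, Complex.add_conj]
        push_cast
        ring

theorem dqc1_trace_estimation_real_part (N : ℕ)
    (U : Matrix (Fin N → Fin 2) (Fin N → Fin 2) ℂ)
    (hU : U ∈ Matrix.unitaryGroup (Fin N → Fin 2) ℂ) :
    let I2N : Matrix (Fin N → Fin 2) (Fin N → Fin 2) ℂ := 1
    let ρ := proj0 ⊗ₖ (((2 : ℂ) ^ N)⁻¹ • I2N)
    let CU := proj0 ⊗ₖ I2N + proj1 ⊗ₖ U
    let σ := CU * (Hadamard ⊗ₖ I2N) * ρ * (Hadamard ⊗ₖ I2N)ᴴ * CUᴴ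
    Matrix.trace ((PauliX ⊗ₖ I2N) * σ) = (((Matrix.trace U).re / 2 ^ N : ℝ) : ℂ) :=
  dqc1_trace_estimation_real_part_general N U
end
end
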